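/- arXiv:1407.7046 — 2 statements merged into one kernel-verified Lean document; each statement's English description precedes it below -/
import Mathlib

section
/- Under the hypotheses of the explicitly controlled product equation, the i-th element of eps n q equals 0 if l (q_t (zero sequence)) < n + i, and equals ε (n+i) (fun x => q_{t++[x]} (eps (n+i+1) (q_{t++[x]}))) otherwise, where t is the list of the first i elements of eps n q. -/
/-- Prepend an element to an infinite sequence. -/
def seqCons {X : Type*} (x : X) (α : ℕ → X) : ℕ → X
  | 0 => x
  | n + 1 => α n

/-- Overwrite the initial segment of an infinite sequence with a finite list. -/
def listApp {X : Type*} (s : List X) (α : ℕ → X) : ℕ → X :=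
  fun i => if h : i < s.length then s.get ⟨i, h⟩ else α (i - s.length)

/-- The list of the first `n` values of an infinite sequence. -/
def firstN {X : Type*} (α : ℕ → X) (n : ℕ) : List X := (List.range n).map α

/-!
Induction on `i`, for all `n` and `q` at once. Unfolding `eps n q` once gives either the zero
sequence, and then the test `l (q_t 0) < n + i` succeeds for every prefix `t`, because `t`
consists of zeros and so `q_t 0 = q 0`, or `c :: eps (n + 1) q_c`. In the second case the entry `i + 1` is entry `i` of
`eps (n + 1) q_c`, and the induction hypothesis for `q_c` is the claim, since
`(q_c)_t = q_{c :: t}` and the first `i + 1` entries are `c :: t`.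
-/

section

variable {X : Type*}

theorem listApp_nil (α : ℕ → X) : listApp [] α = α := by
  funext j
  simp [listApp]

theorem listApp_cons (c : X) (t : List X) (α : ℕ → X) :
    listApp (c :: t) α = seqCons c (listApp t α) := by
  funext j
  cases j with
  | zero => simp [listApp, seqCons]
  | succ k =>
    simp only [listApp, seqCons, List.length_cons, Nat.succ_lt_succ_iff, Nat.succ_sub_succ]
    split <;> simp_all

theorem firstN_seqCons_succ (c : X) (β : ℕ → X) (k : ℕ) :
    firstN (seqCons c β) (k + 1) = c :: firstN β k := by
  simp only [firstN, List.range_succ_eq_map, List.map_cons, List.map_map]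
  rfl

theorem listApp_firstN_const (z : X) (k : ℕ) :
    listApp (firstN (fun _ => z) k) (fun _ => z) = fun _ => z := by
  funext j
  simp only [listApp, firstN]
  split_ifs <;> simp

end

theorem stmt3 {X R : Type*} (z : X) (l : R → ℕ) (ε : ℕ → (X → R) → X)
    (eps : ℕ → ((ℕ → X) → R) → (ℕ → X))
    (heps : ∀ n (q : (ℕ → X) → R),
      eps n q =
        if l (q (fun _ => z)) < n then (fun _ => z)
        else
          let c := ε n (fun x => q (seqCons x (eps (n + 1) (fun α => q (seqCons x α)))))
          seqCons c (eps (n + 1) (fun α => q (seqCons c α)))) :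
    ∀ (n : ℕ) (q : (ℕ → X) → R) (i : ℕ),
      eps n q i =
        (let t := firstN (eps n q) i
         if l (q (listApp t (fun _ => z))) < n + i then z
         else ε (n + i) (fun x =>
           q (listApp (t ++ [x])
              (eps (n + i + 1) (fun α => q (listApp (t ++ [x]) α)))))) := by
  intro n q i
  induction i generalizing n q with
  | zero =>
    rw [heps n q]
    simp only [firstN, List.range_zero, List.map_nil, List.nil_append, listApp_cons, listApp_nil,
      Nat.add_zero]
    split_ifs <;> rfl
  | succ i ih =>
    rw [heps n q]
    split_ifs with hstop
    · simp only [listApp_firstN_const]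
      rw [if_pos (by omega)]
    · set c := ε n fun x => q (seqCons x (eps (n + 1) fun α => q (seqCons x α)))
      change eps (n + 1) (fun α => q (seqCons c α)) i = _
      rw [ih (n + 1) (fun α => q (seqCons c α))]
      simp only [firstN_seqCons_succ, listApp_cons, List.cons_append,
        Nat.add_right_comm n 1 i, ← Nat.add_assoc]
end

section
/- Suppose eps satisfies the explicitly controlled product equation. Given q : (ℕ → X) → R, l : R → ℕ and selection functions ε n : (X → R) → X, define α = eps 0 q and p_n (x) = q_{(α|n)++[x]} (eps (n+1) (q_{(α|n)++[x]})). Then for every n ≤ l (q α): (1) α(n) = ε n (p_n) and (2) p_n (α n) = q α. (Here α|n is the list of the first n values of α.) -/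
lemma listApp_nil_s4 {X : Type*} (β : ℕ → X) : listApp ([] : List X) β = β := by
  funext i; simp [listApp]

lemma listApp_seqCons {X : Type*} (s : List X) (x : X) (β : ℕ → X) :
    listApp s (seqCons x β) = listApp (s ++ [x]) β := by
  funext i
  simp only [listApp, List.length_append, List.length_singleton, List.get_eq_getElem]
  rcases lt_trichotomy i s.length with h | h | h
  · rw [dif_pos h, dif_pos (by omega)]
    simp [List.getElem_append, h]
  · subst h
    rw [dif_neg (lt_irrefl _), dif_pos (by omega), Nat.sub_self]
    simp [seqCons, List.getElem_append]
  · rw [dif_neg (by omega), dif_neg (by omega)]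
    have h2 : i - s.length = (i - (s.length + 1)) + 1 := by omega
    rw [h2]; rfl

lemma firstN_succ {X : Type*} (α : ℕ → X) (n : ℕ) :
    firstN α (n + 1) = firstN α n ++ [α n] := by
  simp [firstN, List.range_succ]

lemma listApp_firstN {X : Type*} (α : ℕ → X) (n : ℕ) :
    listApp (firstN α n) (fun i => α (n + i)) = α := by
  funext i
  simp only [listApp, firstN, List.length_map, List.length_range, List.get_eq_getElem]
  by_cases h : i < n
  · rw [dif_pos h]; simp
  · rw [dif_neg h]; congr 1; omega

lemma spector_step {X R : Type*} (z : X) (l : R → ℕ) (ε : ℕ → (X → R) → X)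
    (eps : ℕ → ((ℕ → X) → R) → (ℕ → X))
    (heps : ∀ n (q : (ℕ → X) → R),
      eps n q =
        if l (q (fun _ => z)) < n then (fun _ => z)
        else
          let c := ε n (fun x => q (seqCons x (eps (n + 1) (fun α => q (seqCons x α)))))
          seqCons c (eps (n + 1) (fun α => q (seqCons c α))))
    (q : (ℕ → X) → R) (n : ℕ) (hn : n ≤ l (q (eps 0 q)))
    (hcur : eps n (fun β => q (listApp (firstN (eps 0 q) n) β)) = fun i => eps 0 q (n + i)) :
    eps 0 q n = ε n (fun x => q (listApp (firstN (eps 0 q) n ++ [x])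
        (eps (n + 1) (fun β => q (listApp (firstN (eps 0 q) n ++ [x]) β)))))
    ∧ eps (n + 1) (fun β => q (listApp (firstN (eps 0 q) (n + 1)) β))
        = fun i => eps 0 q (n + 1 + i) := by
  set α := eps 0 q with hαdef
  set Qn : (ℕ → X) → R := fun β => q (listApp (firstN α n) β) with hQn
  have hQx : ∀ (x : X) (β : ℕ → X), Qn (seqCons x β) = q (listApp (firstN α n ++ [x]) β) := by
    intro x β
    rw [hQn]
    dsimp only
    rw [listApp_seqCons]
  have H := heps n Qn
  have hcond : ¬ l (Qn fun _ => z) < n := by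
    intro hlt
    rw [if_pos hlt] at H
    have h1 : (fun i => α (n + i)) = (fun _ => z) := hcur.symm.trans H
    have h2 : Qn (fun _ => z) = q α := by
      rw [← h1, hQn]
      dsimp only
      rw [listApp_firstN]
    rw [h2] at hlt
    omega
  rw [if_neg hcond] at H
  dsimp only at H
  set c := ε n (fun x => Qn (seqCons x (eps (n + 1) fun β => Qn (seqCons x β)))) with hc
  have hkey : (fun i => α (n + i))
      = seqCons c (eps (n + 1) fun β => Qn (seqCons c β)) := hcur.symm.trans H
  have hα_n : α n = c := by
    have h0 := congrFun hkey 0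
    simpa [seqCons] using h0
  constructor
  · rw [hα_n, hc]
    congr 1
    funext x
    have hfun : (fun β => Qn (seqCons x β)) = fun β => q (listApp (firstN α n ++ [x]) β) :=
      funext (hQx x)
    rw [hQx, hfun]
  · have hQsucc : (fun β => q (listApp (firstN α (n + 1)) β)) = fun β => Qn (seqCons c β) := by
      funext β
      rw [hQx, firstN_succ, hα_n]
    rw [hQsucc]
    funext i
    have h1 := congrFun hkey (i + 1)
    have h2 : n + (i + 1) = n + 1 + i := by omega
    rw [h2] at h1
    exact ((by simpa [seqCons] using h1) : α (n + 1 + i) = _).symm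

lemma spector_key {X R : Type*} (z : X) (l : R → ℕ) (ε : ℕ → (X → R) → X)
    (eps : ℕ → ((ℕ → X) → R) → (ℕ → X))
    (heps : ∀ n (q : (ℕ → X) → R),
      eps n q =
        if l (q (fun _ => z)) < n then (fun _ => z)
        else
          let c := ε n (fun x => q (seqCons x (eps (n + 1) (fun α => q (seqCons x α)))))
          seqCons c (eps (n + 1) (fun α => q (seqCons c α))))
    (q : (ℕ → X) → R) :
    ∀ n, n ≤ l (q (eps 0 q)) →
      eps n (fun β => q (listApp (firstN (eps 0 q) n) β)) = fun i => eps 0 q (n + i) := by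
  intro n
  induction n with
  | zero =>
    intro _
    have h : (fun β => q (listApp (firstN (eps 0 q) 0) β)) = q := by
      funext β
      rw [show firstN (eps 0 q) 0 = [] from rfl, listApp_nil_s4]
    rw [h]
    funext i
    simp
  | succ n ih =>
    intro hn
    exact (spector_step z l ε eps heps q n (Nat.le_of_succ_le hn)
      (ih (Nat.le_of_succ_le hn))).2

theorem stmt4 {X R : Type*} (z : X) (l : R → ℕ) (ε : ℕ → (X → R) → X)
    (eps : ℕ → ((ℕ → X) → R) → (ℕ → X))
    (heps : ∀ n (q : (ℕ → X) → R),
      eps n q =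
        if l (q (fun _ => z)) < n then (fun _ => z)
        else
          let c := ε n (fun x => q (seqCons x (eps (n + 1) (fun α => q (seqCons x α)))))
          seqCons c (eps (n + 1) (fun α => q (seqCons c α))))
    (q : (ℕ → X) → R) :
    let α := eps 0 q
    let p : ℕ → X → R := fun n x =>
      q (listApp (firstN α n ++ [x])
          (eps (n + 1) (fun β => q (listApp (firstN α n ++ [x]) β))))
    ∀ n ≤ l (q α), α n = ε n (p n) ∧ p n (α n) = q α := by
  intro α p n hn
  have hcur := spector_key z l ε eps heps q n hn
  have hstep := spector_step z l ε eps heps q n hn hcur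
  refine ⟨hstep.1, ?_⟩
  show q (listApp (firstN (eps 0 q) n ++ [eps 0 q n])
      (eps (n + 1) (fun β => q (listApp (firstN (eps 0 q) n ++ [eps 0 q n]) β)))) = q (eps 0 q)
  rw [← firstN_succ, hstep.2, listApp_firstN]
end
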